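/- The 2-knit monoid D_2 is isomorphic as a monoid to M = ℤ ⊔ ℕ_{≥1} with multiplication defined by: a·b = a + b for a, b ∈ ℤ; a·k = k·a = k for a ∈ ℤ and k ∈ ℕ_{≥1}; and j·k = j + k for j, k ∈ ℕ_{≥1} (with identity 0 ∈ ℤ). The isomorphism sends σ to 1 ∈ ℤ, σ^{-1} to −1 ∈ ℤ, and τ to 1 ∈ ℕ_{≥1}. -/

import Mathlib

/-- Generators of the `n`-knit monoid `D_n`: `pos i` is the braid generator σ_{i+1},
`neg i` is its formal inverse σ_{i+1}⁻¹, and `tau i` is the hook pair τ_{i+1},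
for `i : Fin (n-1)`. -/
inductive KnitGen (n : ℕ) : Type
  | pos : Fin (n - 1) → KnitGen n
  | neg : Fin (n - 1) → KnitGen n
  | tau : Fin (n - 1) → KnitGen n

/-- σ_i^ε as a one-letter word: `true` gives σ_i, `false` gives σ_i⁻¹. -/
def KnitGen.sg {n : ℕ} (e : Bool) (i : Fin (n - 1)) : FreeMonoid (KnitGen n) :=
  FreeMonoid.of (if e then KnitGen.pos i else KnitGen.neg i)

open KnitGen in
/-- The defining relations of the `n`-knit monoid `D_n`. -/
inductive KnitRel (n : ℕ) : FreeMonoid (KnitGen n) → FreeMonoid (KnitGen n) → Prop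
  | inv_mul (i) : KnitRel n (.of (pos i) * .of (neg i)) 1
  | mul_inv (i) : KnitRel n (.of (neg i) * .of (pos i)) 1
  | sigma_tau (i) : KnitRel n (.of (pos i) * .of (tau i)) (.of (tau i))
  | tau_sigma (i) : KnitRel n (.of (tau i) * .of (pos i)) (.of (tau i))
  | far_ss (e d : Bool) (i k : Fin (n - 1)) (h : Nat.dist i k > 1) :
      KnitRel n (sg e i * sg d k) (sg d k * sg e i)
  | far_st (e : Bool) (i k : Fin (n - 1)) (h : Nat.dist i k > 1) :
      KnitRel n (sg e i * .of (tau k)) (.of (tau k) * sg e i)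
  | far_tt (i k : Fin (n - 1)) (h : Nat.dist i k > 1) :
      KnitRel n (.of (tau i) * .of (tau k)) (.of (tau k) * .of (tau i))
  | braid (i j : Fin (n - 1)) (h : Nat.dist i j = 1) :
      KnitRel n (.of (pos i) * .of (pos j) * .of (pos i))
                (.of (pos j) * .of (pos i) * .of (pos j))
  | mixed (i j : Fin (n - 1)) (h : Nat.dist i j = 1) :
      KnitRel n (.of (pos i) * .of (pos j) * .of (tau i))
                (.of (tau j) * .of (pos i) * .of (pos j))

/-- The `n`-knit monoid `D_n`, the quotient of the free monoid on the generators by the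
congruence generated by the defining relations. -/
abbrev Knit (n : ℕ) : Type := (conGen (KnitRel n)).Quotient

/-- The generator σ_{i+1} of `D_n`. -/
def σK {n : ℕ} (i : Fin (n - 1)) : Knit n :=
  (conGen (KnitRel n)).mk' (FreeMonoid.of (KnitGen.pos i))

/-- The generator σ_{i+1}⁻¹ of `D_n`. -/
def σK' {n : ℕ} (i : Fin (n - 1)) : Knit n :=
  (conGen (KnitRel n)).mk' (FreeMonoid.of (KnitGen.neg i))

/-- The generator τ_{i+1} of `D_n`. -/
def τK {n : ℕ} (i : Fin (n - 1)) : Knit n :=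
  (conGen (KnitRel n)).mk' (FreeMonoid.of (KnitGen.tau i))

/-- The model monoid `M = ℤ ⊔ ℕ_{≥1}`. -/
abbrev KnitModel : Type := ℤ ⊕ ℕ+

instance : Mul KnitModel :=
  ⟨fun x y =>
    match x, y with
    | .inl a, .inl b => .inl (a + b)
    | .inl _, .inr k => .inr k
    | .inr k, .inl _ => .inr k
    | .inr j, .inr k => .inr (j + k)⟩

instance : One KnitModel := ⟨Sum.inl 0⟩

instance : Monoid KnitModel where
  mul_assoc := by
    rintro (a | a) (b | b) (c | c) <;>
      first
        | rfl
        | exact congrArg Sum.inl (add_assoc a b c)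
        | exact congrArg Sum.inr (add_assoc a b c)
  one_mul := by rintro (a | a) <;> first | exact congrArg Sum.inl (zero_add a) | rfl
  mul_one := by rintro (a | a) <;> first | exact congrArg Sum.inl (add_zero a) | rfl


namespace Stmt16Aux

/-- The images of the generators in the model. -/
def f0 : KnitGen 2 → KnitModel
  | .pos _ => Sum.inl 1
  | .neg _ => Sum.inl (-1)
  | .tau _ => Sum.inr 1

lemma fin1_eq (i : Fin (2 - 1)) : i = 0 := Fin.ext (by have := i.isLt; omega)

/-- The forward monoid hom `φ`. -/
def phi : Knit 2 →* KnitModel :=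
  Con.lift _ (FreeMonoid.lift f0) (Con.conGen_le.mpr (by
    rintro x y h
    rcases h with i | i | i | i | ⟨e, d, i, k, h⟩ | ⟨e, i, k, h⟩ | ⟨i, k, h⟩ | ⟨i, j, h⟩ | ⟨i, j, h⟩
    all_goals first
      | (exfalso; have hi := i.isLt; simp only [Nat.dist] at h; omega)
      | (exfalso; have hi := i.isLt; have hj := j.isLt; simp only [Nat.dist] at h; omega)
      | (exfalso; have hi := i.isLt; have hk := k.isLt; simp only [Nat.dist] at h; omega)
      | (show FreeMonoid.lift f0 _ = FreeMonoid.lift f0 _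
         simp only [map_mul, map_one, FreeMonoid.lift_eval_of, f0]
         first
           | (show Sum.inl (1 + -1) = Sum.inl 0; norm_num)
           | (show Sum.inl (-1 + 1) = Sum.inl 0; norm_num)
           | rfl)))

noncomputable abbrev s : Knit 2 := σK 0
noncomputable abbrev s' : Knit 2 := σK' 0
noncomputable abbrev t : Knit 2 := τK 0

lemma rel_eq {x y : FreeMonoid (KnitGen 2)} (h : KnitRel 2 x y) :
    (conGen (KnitRel 2)).mk' x = (conGen (KnitRel 2)).mk' y :=
  (Con.eq _).mpr (ConGen.Rel.of _ _ h)

lemma ss' : s * s' = 1 := by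
  have := rel_eq (KnitRel.inv_mul (n := 2) 0)
  simpa [σK, σK', map_mul, map_one] using this

lemma s's : s' * s = 1 := by
  have := rel_eq (KnitRel.mul_inv (n := 2) 0)
  simpa [σK, σK', map_mul, map_one] using this

lemma st : s * t = t := by
  have := rel_eq (KnitRel.sigma_tau (n := 2) 0)
  simpa [σK, τK, map_mul] using this

lemma ts : t * s = t := by
  have := rel_eq (KnitRel.tau_sigma (n := 2) 0)
  simpa [σK, τK, map_mul] using this

lemma s't : s' * t = t := by
  calc s' * t = s' * (s * t) := by rw [st]
  _ = (s' * s) * t := by rw [mul_assoc]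
  _ = t := by rw [s's, one_mul]

lemma ts' : t * s' = t := by
  calc t * s' = (t * s) * s' := by rw [ts]
  _ = t * (s * s') := by rw [mul_assoc]
  _ = t := by rw [ss', mul_one]

/-- `σ` as a unit of `D_2`. -/
noncomputable def u : (Knit 2)ˣ := ⟨s, s', ss', s's⟩

lemma u_zpow_mul_t (a : ℤ) : ((u ^ a : (Knit 2)ˣ) : Knit 2) * t = t := by
  induction a using Int.induction_on with
  | zero => simp
  | succ n ih =>
      rw [zpow_add_one, Units.val_mul, mul_assoc]
      show _ * (s * t) = t
      rw [st, ih]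
  | pred n ih =>
      rw [zpow_sub_one, Units.val_mul, mul_assoc]
      show _ * (s' * t) = t
      rw [s't, ih]

lemma t_mul_u_zpow (a : ℤ) : t * ((u ^ a : (Knit 2)ˣ) : Knit 2) = t := by
  induction a using Int.induction_on with
  | zero => simp
  | succ n ih =>
      rw [zpow_add_one, Units.val_mul, ← mul_assoc, ih]
      exact ts
  | pred n ih =>
      rw [zpow_sub_one, Units.val_mul, ← mul_assoc, ih]
      exact ts'

lemma u_zpow_mul_t_pow (a : ℤ) (k : ℕ+) :
    ((u ^ a : (Knit 2)ˣ) : Knit 2) * t ^ (k : ℕ) = t ^ (k : ℕ) := by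
  obtain ⟨n, hn⟩ : ∃ n : ℕ, (k : ℕ) = n + 1 := ⟨(k : ℕ) - 1, (Nat.succ_pred_eq_of_pos k.2).symm⟩
  rw [hn, pow_succ', ← mul_assoc, u_zpow_mul_t]

lemma t_pow_mul_u_zpow (a : ℤ) (k : ℕ+) :
    t ^ (k : ℕ) * ((u ^ a : (Knit 2)ˣ) : Knit 2) = t ^ (k : ℕ) := by
  obtain ⟨n, hn⟩ : ∃ n : ℕ, (k : ℕ) = n + 1 := ⟨(k : ℕ) - 1, (Nat.succ_pred_eq_of_pos k.2).symm⟩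
  rw [hn, pow_succ, mul_assoc, t_mul_u_zpow]

/-- The inverse monoid hom `ψ`. -/
noncomputable def psi : KnitModel →* Knit 2 where
  toFun x := match x with
    | .inl a => ((u ^ a : (Knit 2)ˣ) : Knit 2)
    | .inr k => t ^ (k : ℕ)
  map_one' := by
    show ((u ^ (0 : ℤ) : (Knit 2)ˣ) : Knit 2) = 1
    simp
  map_mul' := by
    rintro (a | j) (b | k)
    · show ((u ^ (a + b) : (Knit 2)ˣ) : Knit 2) = _
      rw [zpow_add, Units.val_mul]
    · exact (u_zpow_mul_t_pow a k).symm
    · exact (t_pow_mul_u_zpow b j).symm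
    · show t ^ ((j + k : ℕ+) : ℕ) = t ^ (j : ℕ) * t ^ (k : ℕ)
      rw [PNat.add_coe, pow_add]

lemma phi_mk_of (g : KnitGen 2) :
    phi ((conGen (KnitRel 2)).mk' (FreeMonoid.of g)) = f0 g := by
  simp [phi, Con.lift_mk', FreeMonoid.lift_eval_of]

lemma psi_comp_phi : psi.comp phi = MonoidHom.id (Knit 2) := by
  have hcomp : (psi.comp phi).comp (Con.mk' _) =
      (MonoidHom.id (Knit 2)).comp (Con.mk' _) := by
    apply FreeMonoid.hom_eq
    intro g
    simp only [MonoidHom.comp_apply, MonoidHom.id_apply]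
    rw [phi_mk_of]
    cases g with
    | pos i =>
        obtain rfl := fin1_eq i
        show ((u ^ (1 : ℤ) : (Knit 2)ˣ) : Knit 2) = _
        rw [zpow_one]; rfl
    | neg i =>
        obtain rfl := fin1_eq i
        show ((u ^ (-1 : ℤ) : (Knit 2)ˣ) : Knit 2) = _
        rw [zpow_neg_one]; rfl
    | tau i =>
        obtain rfl := fin1_eq i
        show t ^ ((1 : ℕ+) : ℕ) = _
        rw [PNat.one_coe, pow_one]
        rfl
  ext x
  exact DFunLike.congr_fun hcomp (FreeMonoid.of x)

lemma phi_s : phi s = Sum.inl 1 := phi_mk_of (KnitGen.pos 0)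
lemma phi_s' : phi s' = Sum.inl (-1) := phi_mk_of (KnitGen.neg 0)
lemma phi_t : phi t = Sum.inr 1 := phi_mk_of (KnitGen.tau 0)

/-- `Sum.inl 1` as a unit of the model. -/
def v : KnitModelˣ :=
  ⟨Sum.inl 1, Sum.inl (-1),
    by show Sum.inl (1 + -1) = (1 : KnitModel); norm_num; rfl,
    by show Sum.inl (-1 + 1) = (1 : KnitModel); norm_num; rfl⟩

lemma v_zpow (a : ℤ) : ((v ^ a : KnitModelˣ) : KnitModel) = Sum.inl a := by
  induction a using Int.induction_on with
  | zero => simp; rfl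
  | succ n ih =>
      rw [zpow_add_one, Units.val_mul, ih]
      show Sum.inl ((n : ℤ) + 1) = _
      rfl
  | pred n ih =>
      rw [zpow_sub_one, Units.val_mul, ih]
      show Sum.inl ((-(n : ℤ)) + -1) = _
      norm_num
      rfl

lemma inr_pow_nat (n : ℕ) :
    (Sum.inr 1 : KnitModel) ^ (n + 1) = Sum.inr ⟨n + 1, Nat.succ_pos n⟩ := by
  induction n with
  | zero => rw [pow_one]; rfl
  | succ n ih =>
      rw [pow_succ, ih]
      rfl

lemma inr_pow (k : ℕ+) : (Sum.inr 1 : KnitModel) ^ (k : ℕ) = Sum.inr k := by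
  obtain ⟨m, hm⟩ := k
  obtain ⟨n, rfl⟩ : ∃ n, m = n + 1 := ⟨m - 1, by omega⟩
  exact inr_pow_nat n

lemma map_u : Units.map (phi : Knit 2 →* KnitModel) u = v := by
  ext
  exact phi_s

lemma phi_comp_psi : phi.comp psi = MonoidHom.id KnitModel := by
  ext x
  rcases x with a | k
  · show phi ((u ^ a : (Knit 2)ˣ) : Knit 2) = Sum.inl a
    have : phi ((u ^ a : (Knit 2)ˣ) : Knit 2)
        = ((Units.map (phi : Knit 2 →* KnitModel) (u ^ a) : KnitModelˣ) : KnitModel) := rfl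
    rw [this, map_zpow, map_u, v_zpow]
  · show phi (t ^ (k : ℕ)) = Sum.inr k
    rw [map_pow, phi_t, inr_pow]

end Stmt16Aux

/-- `D_2` is isomorphic to the model monoid `ℤ ⊔ ℕ_{≥1}`, via σ ↦ 1 ∈ ℤ, σ⁻¹ ↦ -1 ∈ ℤ,
τ ↦ 1 ∈ ℕ_{≥1}. -/
theorem stmt16 :
    ∃ φ : Knit 2 ≃* KnitModel,
      φ (σK (0 : Fin (2 - 1))) = Sum.inl 1 ∧
      φ (σK' (0 : Fin (2 - 1))) = Sum.inl (-1) ∧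
      φ (τK (0 : Fin (2 - 1))) = Sum.inr 1 := by
  refine ⟨MonoidHom.toMulEquiv Stmt16Aux.phi Stmt16Aux.psi Stmt16Aux.psi_comp_phi
    Stmt16Aux.phi_comp_psi, ?_, ?_, ?_⟩
  · exact Stmt16Aux.phi_s
  · exact Stmt16Aux.phi_s'
  · exact Stmt16Aux.phi_t
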